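/- Suppose a sequence of N rounds is partitioned into C consecutive blocks (concepts), and within each block c the perceptron's number of mistakes is at most 2√K · W_c + K(K+1), where W_c denotes the norm of the weight vector at the start of block c, with W_1 = 0 and W_{c+1} ≤ W_c + M_c·√(K+1) where M_c is the number of mistakes in block c. Then the total number of mistakes over all N rounds is bounded by a constant depending only on K and C (independent of N), and hence the fraction of mistakes tends to 0 as N → ∞ with C, K fixed. -/

import Mathlib

/-!
Within concept `c` the mistakes are at most `a * W c + b`, and each mistake moves the weight by
at most `s`, so the weight grows at most like the recursion `w (n + 1) = (1 + a * s) * w n + b * s`,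
`w 0 = 0`, i.e. geometrically in the number of concepts. Plugging this bound on `W c` back into the
per-concept mistake bound bounds the total number of mistakes by a quantity in which the number of
rounds does not appear; dividing by `N` then sends the mistake fraction to `0`.
-/

open Finset

noncomputable def weightBound (a b s : ℝ) (n : ℕ) : ℝ :=
  b * s * ∑ i ∈ range n, (1 + a * s) ^ i

lemma weightBound_succ (a b s : ℝ) (n : ℕ) :
    weightBound a b s (n + 1) = weightBound a b s n + (a * weightBound a b s n + b) * s := by
  simp only [weightBound, geom_sum_succ]
  ring

noncomputable def mistakeBound (a b s : ℝ) (C : ℕ) : ℝ :=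
  ∑ c ∈ Icc 1 C, (a * weightBound a b s (c - 1) + b)

section

variable {a b s : ℝ} {C : ℕ} {W M : ℕ → ℝ}

lemma weight_le_weightBound (ha : 0 ≤ a) (hs : 0 ≤ s) (hW1 : W 1 = 0)
    (hM : ∀ c, 1 ≤ c → c ≤ C → M c ≤ a * W c + b)
    (hW : ∀ c, 1 ≤ c → c ≤ C → W (c + 1) ≤ W c + M c * s) :
    ∀ c, 1 ≤ c → c ≤ C + 1 → W c ≤ weightBound a b s (c - 1) := by
  intro c hc
  induction c, hc using Nat.le_induction with
  | base => intro _; simp [weightBound, hW1]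
  | succ c hc ih =>
    intro hcC
    have hcC' : c ≤ C := by omega
    have hWc := ih (by omega)
    have hMc : M c ≤ a * weightBound a b s (c - 1) + b :=
      (hM c hc hcC').trans (by gcongr)
    have hc1 : c + 1 - 1 = c - 1 + 1 := by omega
    calc W (c + 1) ≤ W c + M c * s := hW c hc hcC'
      _ ≤ weightBound a b s (c - 1) + (a * weightBound a b s (c - 1) + b) * s := by gcongr
      _ = weightBound a b s (c + 1 - 1) := by rw [hc1, weightBound_succ]

lemma sum_le_mistakeBound (ha : 0 ≤ a) (hs : 0 ≤ s) (hW1 : W 1 = 0)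
    (hM : ∀ c, 1 ≤ c → c ≤ C → M c ≤ a * W c + b)
    (hW : ∀ c, 1 ≤ c → c ≤ C → W (c + 1) ≤ W c + M c * s) :
    ∑ c ∈ Icc 1 C, M c ≤ mistakeBound a b s C := by
  refine sum_le_sum fun c hc => ?_
  obtain ⟨hc1, hcC⟩ := mem_Icc.mp hc
  have hWc := weight_le_weightBound ha hs hW1 hM hW c hc1 (by omega)
  exact (hM c hc1 hcC).trans (by gcongr)

end

/-- Bounded-mistake argument for finitely many learnable concepts: the total number of
mistakes is bounded by a constant depending only on K and C, so the mistake fraction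
over N rounds tends to 0. -/
theorem stmt13 :
    ∃ B : ℕ → ℕ → ℝ,
      ∀ (K C : ℕ), 1 ≤ K → 1 ≤ C →
      ∀ (W M : ℕ → ℝ),
        (∀ c, 0 ≤ M c) →
        W 1 = 0 →
        (∀ c, 1 ≤ c → c ≤ C → M c ≤ 2 * Real.sqrt K * W c + K * ((K : ℝ) + 1)) →
        (∀ c, 1 ≤ c → c ≤ C → W (c + 1) ≤ W c + M c * Real.sqrt ((K : ℝ) + 1)) →
        (∑ c ∈ Finset.Icc 1 C, M c) ≤ B K C ∧
        Filter.Tendsto (fun N : ℕ => (∑ c ∈ Finset.Icc 1 C, M c) / N)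
          Filter.atTop (nhds 0) := by
  refine ⟨fun K C => mistakeBound (2 * Real.sqrt K) (K * ((K : ℝ) + 1)) (Real.sqrt ((K : ℝ) + 1)) C,
    fun K C _ _ W M _ hW1 hM hW => ⟨?_, tendsto_const_div_atTop_nhds_zero_nat _⟩⟩
  exact sum_le_mistakeBound (by positivity) (Real.sqrt_nonneg _) hW1 hM hW
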